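/- arXiv:2004.03920 — 3 statements merged into one kernel-verified Lean document; each statement's English description precedes it below -/
import Mathlib

section
/- Fix a real number λ ≠ 0. For every integer n ≥ 0 and every real x, the degenerate Bell polynomial satisfies B_{n,λ}(x) = Σ_{k=0}^{n} S_{2,λ}(n,k)(x)_{k,λ}. -/
open Finset

/-- The degenerate falling factorial `(x)_{n,λ} = x(x−λ)⋯(x−(n−1)λ)`;
for `lam = 1` it is the ordinary falling factorial `(x)_n`. -/
noncomputable def dff (lam : ℝ) (n : ℕ) (x : ℝ) : ℝ :=
  ∏ i ∈ Finset.range n, (x - i * lam)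

/-- The degenerate exponential `e_λ^x(t) = Σ_{n≥0} (x)_{n,λ} t^n/n!`. -/
noncomputable def degExp (lam x : ℝ) : PowerSeries ℝ :=
  PowerSeries.mk fun n => dff lam n x / n.factorial

/-- The degenerate logarithm `log_λ(1+t) = Σ_{n≥1} λ^{n−1}(1)_{n,1/λ} t^n/n!`. -/
noncomputable def degLog (lam : ℝ) : PowerSeries ℝ :=
  PowerSeries.mk fun n =>
    if n = 0 then 0 else lam ^ (n - 1) * dff (1 / lam) n 1 / n.factorial

/-- Composition `f(g(t))` of formal power series (valid definition of composition
when `g` has zero constant term, as in all uses below). -/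
noncomputable def pscomp (f g : PowerSeries ℝ) : PowerSeries ℝ :=
  PowerSeries.mk fun n =>
    ∑ k ∈ Finset.range (n + 1), (PowerSeries.coeff k f) * (PowerSeries.coeff n (g ^ k))

/-!
Reading off the coefficient of `tⁿ` reduces the claim to the generating function of the degenerate
Stirling numbers, `n! [tⁿ] (e_λ(t) - 1)^k = k! S_{2,λ}(n,k)`. Since `e_λ^x e_λ^y = e_λ^{x+y}`, the
binomial theorem turns `n! [tⁿ] (e_λ(t) - 1)^k` into the `k`-th forward difference at `0` of
`j ↦ (j)_{n,λ}`. The defining identity of `S_{2,λ}` expands this function in the Newton basis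
`(j)_m = m! C(j, m)`, whose `k`-th forward differences at `0` are `k! δ_{km}`.
-/

open PowerSeries fwdDiff
open scoped Nat

lemma fwdDiff_iter_choose_smul_zero {G : Type*} [AddCommGroup G] (a : G) (m k : ℕ) :
    (Δ_[1])^[k] (fun j : ℕ ↦ j.choose m • a) 0 = if k = m then a else 0 := by
  have h := fwdDiff_iter_choose_zero m k
  simp only [fwdDiff_iter_eq_sum_shift, zero_add, smul_eq_mul, mul_one] at h ⊢
  simp_rw [← Nat.cast_smul_eq_nsmul ℤ, smul_smul, ← sum_smul, h, ite_smul, one_smul, zero_smul]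

lemma fwdDiff_iter_sum_mul_descFactorial {R : Type*} [CommRing R] (c : ℕ → R) {n k : ℕ}
    (hk : k ≤ n) :
    (Δ_[1])^[k] (fun j : ℕ ↦ ∑ m ∈ range (n + 1), c m * j.descFactorial m) 0 = k ! * c k := by
  have hchoose : (fun j : ℕ ↦ ∑ m ∈ range (n + 1), c m * j.descFactorial m)
      = ∑ m ∈ range (n + 1), fun j : ℕ ↦ j.choose m • (m ! * c m) := by
    ext j
    simp [Nat.descFactorial_eq_factorial_mul_choose, nsmul_eq_mul, mul_comm, mul_left_comm]
  rw [hchoose, fwdDiff_iter_finsetSum, Finset.sum_apply]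
  simp_rw [fwdDiff_iter_choose_smul_zero]
  simp [Nat.lt_succ_of_le hk]

lemma dff_succ (lam : ℝ) (n : ℕ) (x : ℝ) : dff lam (n + 1) x = dff lam n x * (x - n * lam) :=
  prod_range_succ _ _

lemma dff_add (lam : ℝ) (n : ℕ) (x y : ℝ) :
    dff lam n (x + y) =
      ∑ ij ∈ antidiagonal n, (n.choose ij.1 : ℝ) * (dff lam ij.1 x * dff lam ij.2 y) := by
  induction n with
  | zero => simp [dff]
  | succ n ih =>
    rw [dff_succ, ih, sum_mul,
      sum_antidiagonal_choose_succ_mul (fun i j ↦ dff lam i x * dff lam j y) n,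
      ← sum_add_distrib]
    refine sum_congr rfl fun ij hij ↦ ?_
    have hsum : ij.1 + ij.2 = n := mem_antidiagonal.mp hij
    have hsplit : x + y - n * lam = (x - ij.1 * lam) + (y - ij.2 * lam) := by
      rw [← hsum]; push_cast; ring
    rw [hsplit, dff_succ, dff_succ, ← Nat.choose_symm_of_eq_add hsum.symm]
    ring

lemma dff_one_natCast (m j : ℕ) : dff 1 m j = j.descFactorial m := by
  simp [dff, ← descPochhammer_eval_eq_prod_range, descPochhammer_eval_eq_descFactorial]

lemma coeff_degExp (lam x : ℝ) (n : ℕ) : coeff n (degExp lam x) = dff lam n x / n ! :=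
  coeff_mk _ _

lemma degExp_zero (lam : ℝ) : degExp lam 0 = 1 := by
  ext (_ | n)
  · simp [coeff_degExp, dff]
  · simp [coeff_degExp, dff, prod_range_succ']

lemma degExp_add (lam x y : ℝ) : degExp lam (x + y) = degExp lam x * degExp lam y := by
  ext n
  rw [coeff_mul, coeff_degExp, dff_add, sum_div]
  refine sum_congr rfl fun ij hij ↦ ?_
  obtain rfl : ij.1 + ij.2 = n := mem_antidiagonal.mp hij
  have hfac : ((ij.1 + ij.2).choose ij.1 * ij.1 ! * ij.2 ! : ℝ) = (ij.1 + ij.2)! := by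
    rw [Nat.choose_symm_add]
    exact_mod_cast Nat.add_choose_mul_factorial_mul_factorial ij.1 ij.2
  have hchoose : ((ij.1 + ij.2).choose ij.1 : ℝ) ≠ 0 := by
    exact_mod_cast (Nat.choose_pos (Nat.le_add_right _ _)).ne'
  rw [coeff_degExp, coeff_degExp, ← hfac]
  field_simp

lemma degExp_natCast (lam : ℝ) (j : ℕ) : degExp lam j = degExp lam 1 ^ j := by
  induction j with
  | zero => simpa using degExp_zero lam
  | succ j ih => rw [Nat.cast_succ, degExp_add, ih, pow_succ]

lemma coeff_degExp_sub_one_pow (lam : ℝ) (n k : ℕ) :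
    coeff n ((degExp lam 1 - 1) ^ k) = (Δ_[1])^[k] (fun j : ℕ ↦ dff lam n j) 0 / n ! := by
  rw [sub_eq_add_neg, add_pow, map_sum, fwdDiff_iter_eq_sum_shift, sum_div]
  refine sum_congr rfl fun j _ ↦ ?_
  have hconst : ((-1) ^ (k - j) * k.choose j : ℝ⟦X⟧) = C ((-1 : ℝ) ^ (k - j) * k.choose j) := by
    simp
  rw [← degExp_natCast, mul_assoc, hconst, coeff_mul_C, coeff_degExp, zsmul_eq_mul, smul_eq_mul,
    mul_one, zero_add]
  push_cast
  ring

lemma coeff_degExp_sub_one_pow_of_stirling (lam : ℝ) {n k : ℕ} (hk : k ≤ n) (S : ℕ → ℝ)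
    (hS : ∀ j : ℕ, dff lam n j = ∑ m ∈ range (n + 1), S m * dff 1 m j) :
    coeff n ((degExp lam 1 - 1) ^ k) = k ! * S k / n ! := by
  have hnewton : (fun j : ℕ ↦ dff lam n j)
      = fun j ↦ ∑ m ∈ range (n + 1), S m * j.descFactorial m := by
    funext j
    simp_rw [hS, dff_one_natCast]
  rw [coeff_degExp_sub_one_pow, hnewton, fwdDiff_iter_sum_mul_descFactorial S hk]

theorem degenerate_bell_expansion_general (lam : ℝ)
    (S2 : ℕ → ℕ → ℝ) (B : ℕ → ℝ → ℝ)
    (hS2 : ∀ (n : ℕ) (x : ℝ), dff lam n x = ∑ k ∈ Finset.range (n + 1), S2 n k * dff 1 k x)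
    (hB : ∀ x : ℝ, pscomp (degExp lam x) (degExp lam 1 - 1) = PowerSeries.mk (fun n => B n x / n.factorial))
    : ∀ (n : ℕ) (x : ℝ), B n x = ∑ k ∈ Finset.range (n + 1), S2 n k * dff lam k x := by
  intro n x
  have hcoeff := congrArg (coeff n) (hB x)
  rw [pscomp, coeff_mk, coeff_mk] at hcoeff
  calc B n x = n ! * (B n x / n !) := by field_simp
    _ = n ! * ∑ k ∈ range (n + 1),
          coeff k (degExp lam x) * coeff n ((degExp lam 1 - 1) ^ k) := by
      rw [hcoeff]
    _ = ∑ k ∈ range (n + 1), S2 n k * dff lam k x := by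
      rw [mul_sum]
      refine sum_congr rfl fun k hk ↦ ?_
      rw [coeff_degExp, coeff_degExp_sub_one_pow_of_stirling lam
        (Nat.lt_succ_iff.mp (mem_range.mp hk)) (S2 n) (hS2 n ·)]
      field_simp

theorem degenerate_bell_expansion (lam : ℝ) (hlam : lam ≠ 0)
    (S2 : ℕ → ℕ → ℝ) (B : ℕ → ℝ → ℝ)
    (hS2 : ∀ (n : ℕ) (x : ℝ), dff lam n x = ∑ k ∈ Finset.range (n + 1), S2 n k * dff 1 k x)
    (hB : ∀ x : ℝ, pscomp (degExp lam x) (degExp lam 1 - 1) = PowerSeries.mk (fun n => B n x / n.factorial))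
    : ∀ (n : ℕ) (x : ℝ), B n x = ∑ k ∈ Finset.range (n + 1), S2 n k * dff lam k x :=
  degenerate_bell_expansion_general lam S2 B hS2 hB
end

section
/- Fix a real number λ ≠ 0. For all integers n, k with n ≥ k ≥ 0, the Jindalrae–Stirling number of the first kind satisfies S^{(1)}_{J,λ}(n,k) = Σ_{m=k}^{n} S_{1,λ}(n,m) S_{1,λ}(m,k). -/
open Finset

/-!
Write `L(t) = log_λ(1 + t)`. Since `e_λ^x(t) = (1 + λt)^(x/λ)` and `1 + λ L(t) = (1 + t)^λ`, the
degenerate exponential undoes the degenerate logarithm: `e_λ^x(L(t)) = (1 + t)^x`. Comparing the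
coefficients of `tⁿ` expands `(x)_n` in the basis `(x)_{m,λ}` with coefficients
`n!/m! [tⁿ] L(t)^m`, the Bell matrix of `L`; so this matrix is `S_{1,λ}`. The Jindalrae–Stirling
numbers form the Bell matrix of `L ∘ L`, and Bell matrices are multiplicative under composition
because `(L ∘ L)^k = L^k ∘ L`.
-/

open PowerSeries

namespace PowerSeries

section Composition

variable {R : Type*} [CommRing R]

lemma coeff_pow_eq_zero_of_lt {g : PowerSeries R} (hg : constantCoeff g = 0) {n k : ℕ}
    (h : n < k) : coeff n (g ^ k) = 0 :=
  coeff_of_lt_order _ <|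
    lt_of_lt_of_le (by exact_mod_cast h) (le_order_pow_of_constantCoeff_eq_zero k hg)

lemma coeff_subst_eq_sum_range {g : PowerSeries R} (hg : constantCoeff g = 0) (f : PowerSeries R)
    (n : ℕ) : coeff n (f.subst g) = ∑ k ∈ range (n + 1), coeff k f * coeff n (g ^ k) := by
  rw [coeff_subst' (HasSubst.of_constantCoeff_zero' hg)]
  apply finsum_eq_sum_of_support_subset
  intro k hk
  simp only [Function.mem_support, smul_eq_mul] at hk
  simp only [coe_range, Set.mem_Iio]
  by_contra h
  exact hk (by rw [coeff_pow_eq_zero_of_lt hg (by omega), mul_zero])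

end Composition

section BinomialSeries

variable {R A : Type*} [CommRing R] [BinomialRing R] [Ring A] [Algebra R A]

lemma binomialSeries_pow (r : R) (N : ℕ) : binomialSeries A r ^ N = binomialSeries A (N * r) := by
  induction N with
  | zero => simp
  | succ N ih => rw [pow_succ, ih, ← binomialSeries_add, Nat.cast_succ, add_one_mul]

lemma constantCoeff_binomialSeries_sub_one (r : R) :
    constantCoeff (binomialSeries A r - 1) = 0 := by
  simp

end BinomialSeries

end PowerSeries

lemma pscomp_eq_subst {g : PowerSeries ℝ} (hg : constantCoeff g = 0) (f : PowerSeries ℝ) :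
    pscomp f g = f.subst g := by
  ext n
  rw [pscomp, coeff_mk, coeff_subst_eq_sum_range hg]

section BellMatrix

variable {R : Type*} [Field R]

/-- `(g t)^k / k! = ∑ₙ bellMatrix g n k tⁿ / n!`; for `g = log_λ(1 + t)` these are the
degenerate Stirling numbers of the first kind `S_{1,λ}(n, k)`. -/
noncomputable def bellMatrix (g : PowerSeries R) (n k : ℕ) : R :=
  n.factorial * coeff n (g ^ k) / k.factorial

lemma bellMatrix_eq_zero_of_lt {g : PowerSeries R} (hg : constantCoeff g = 0) {n k : ℕ}
    (h : n < k) : bellMatrix g n k = 0 := by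
  rw [bellMatrix, coeff_pow_eq_zero_of_lt hg h, mul_zero, zero_div]

lemma bellMatrix_subst [CharZero R] {g : PowerSeries R} (hg : constantCoeff g = 0)
    (f : PowerSeries R) (n k : ℕ) :
    bellMatrix (f.subst g) n k = ∑ m ∈ range (n + 1), bellMatrix g n m * bellMatrix f m k := by
  rw [bellMatrix, ← subst_pow (HasSubst.of_constantCoeff_zero' hg), coeff_subst_eq_sum_range hg,
    mul_sum, sum_div]
  refine sum_congr rfl fun m _ => ?_
  have hm : (m.factorial : R) ≠ 0 := Nat.cast_ne_zero.mpr m.factorial_ne_zero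
  rw [bellMatrix, bellMatrix]
  field_simp

end BellMatrix

lemma dff_one_eq_descPochhammer_eval (n : ℕ) (x : ℝ) :
    dff 1 n x = (descPochhammer ℝ n).eval x := by
  simp [dff, descPochhammer_eval_eq_prod_range]

lemma dff_eq_pow_mul_dff_one {lam : ℝ} (hlam : lam ≠ 0) (n : ℕ) (x : ℝ) :
    dff lam n x = lam ^ n * dff 1 n (x / lam) := by
  rw [dff, dff, ← card_range n, ← prod_const, card_range, ← prod_mul_distrib]
  refine prod_congr rfl fun i _ => ?_
  field_simp

lemma eq_of_forall_sum_mul_dff_eq (lam : ℝ) {n : ℕ} {c d : ℕ → ℝ}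
    (h : ∀ x, ∑ l ∈ range (n + 1), c l * dff lam l x =
      ∑ l ∈ range (n + 1), d l * dff lam l x) :
    ∀ l ≤ n, c l = d l := by
  let S : Polynomial.Sequence ℝ :=
    ⟨fun l => ∏ i ∈ range l, (Polynomial.X - Polynomial.C (i * lam)), fun l => by
      simp only [Polynomial.degree_prod, Polynomial.degree_X_sub_C, sum_const, card_range,
        nsmul_one]⟩
  have hS (l : ℕ) (x : ℝ) : (S l).eval x = dff lam l x := by
    simp [S, dff, Polynomial.eval_prod]
  have hsum : ∑ l ∈ range (n + 1), (c l - d l) • S l = 0 := by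
    apply Polynomial.funext
    intro x
    simp only [Polynomial.eval_finsetSum, Polynomial.eval_smul, hS, smul_eq_mul, sub_mul,
      sum_sub_distrib, h, sub_self, Polynomial.eval_zero]
  intro l hl
  exact sub_eq_zero.mp
    (linearIndependent_iff'.mp S.linearIndependent _ _ hsum l (mem_range.mpr (by omega)))

namespace PowerSeries

lemma coeff_binomialSeries (a : ℝ) (n : ℕ) :
    coeff n (binomialSeries ℝ a) = dff 1 n a / n.factorial := by
  rw [binomialSeries_coeff, Ring.choose_eq_smul, dff_one_eq_descPochhammer_eval,
    ← Polynomial.eval₂_smulOneHom_eq_smeval,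
    RingHom.ext_int RingHom.smulOneHom (algebraMap ℤ ℝ), ← Polynomial.eval_map, descPochhammer_map,
    smul_eq_mul, smul_eq_mul, mul_one, inv_mul_eq_div]

lemma binomialSeries_natCast_subst (N : ℕ) (b : ℝ) :
    (binomialSeries ℝ (N : ℝ)).subst (binomialSeries ℝ b - 1) =
      binomialSeries ℝ (N * b) := by
  have hg := HasSubst.of_constantCoeff_zero' (constantCoeff_binomialSeries_sub_one (A := ℝ) b)
  rw [binomialSeries_nat, ← coe_substAlgHom hg, map_pow, map_add, map_one, coe_substAlgHom,
    subst_X hg, add_sub_cancel, binomialSeries_pow]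

/-- Both sides have `n`-th coefficient polynomial in `a`, and they agree at every `a ∈ ℕ`. -/
lemma binomialSeries_subst (a b : ℝ) :
    (binomialSeries ℝ a).subst (binomialSeries ℝ b - 1) = binomialSeries ℝ (a * b) := by
  ext n
  have hg := constantCoeff_binomialSeries_sub_one (A := ℝ) b
  set P : Polynomial ℝ := ∑ k ∈ range (n + 1), Polynomial.C
      (coeff n ((binomialSeries ℝ b - 1) ^ k) / (k.factorial : ℝ)) * descPochhammer ℝ k
  set Q : Polynomial ℝ := Polynomial.C (n.factorial : ℝ)⁻¹ *
      (descPochhammer ℝ n).comp (Polynomial.C b * Polynomial.X)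
  have hP (x : ℝ) :
      P.eval x = coeff n ((binomialSeries ℝ x).subst (binomialSeries ℝ b - 1)) := by
    simp only [P, coeff_subst_eq_sum_range hg, coeff_binomialSeries, Polynomial.eval_finsetSum,
      Polynomial.eval_mul, Polynomial.eval_C, dff_one_eq_descPochhammer_eval]
    refine sum_congr rfl fun k _ => by ring
  have hQ (x : ℝ) : Q.eval x = coeff n (binomialSeries ℝ (x * b)) := by
    simp only [Q, coeff_binomialSeries, Polynomial.eval_mul, Polynomial.eval_C,
      Polynomial.eval_comp, Polynomial.eval_X, dff_one_eq_descPochhammer_eval]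
    rw [mul_comm b x, inv_mul_eq_div]
  have hPQ : P = Q := by
    apply Polynomial.eq_of_infinite_eval_eq
    refine (Set.infinite_range_of_injective Nat.cast_injective).mono ?_
    rintro x ⟨N, rfl⟩
    rw [Set.mem_ofPred_eq, hP, hQ, binomialSeries_natCast_subst]
  rw [← hP, hPQ, hQ]

end PowerSeries

lemma degExp_one (a : ℝ) : degExp 1 a = PowerSeries.binomialSeries ℝ a := by
  ext n
  rw [coeff_binomialSeries, degExp, coeff_mk]

lemma degExp_eq_rescale {lam : ℝ} (hlam : lam ≠ 0) (x : ℝ) :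
    degExp lam x = rescale lam (binomialSeries ℝ (x / lam)) := by
  ext n
  rw [coeff_rescale, coeff_binomialSeries, degExp, coeff_mk, dff_eq_pow_mul_dff_one hlam,
    mul_div_assoc]

lemma constantCoeff_degLog (lam : ℝ) : constantCoeff (degLog lam) = 0 := by
  simp [degLog, ← coeff_zero_eq_constantCoeff_apply]

lemma smul_degLog {lam : ℝ} (hlam : lam ≠ 0) :
    lam • degLog lam = PowerSeries.binomialSeries ℝ lam - 1 := by
  ext n
  rw [map_smul, map_sub, coeff_binomialSeries, degLog, coeff_mk, coeff_one, smul_eq_mul]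
  rcases n with _ | n
  · simp [dff]
  · rw [if_neg n.succ_ne_zero, if_neg n.succ_ne_zero, sub_zero,
      dff_eq_pow_mul_dff_one (one_div_ne_zero hlam), one_div_div, div_one, Nat.add_sub_cancel,
      ← mul_div_assoc, ← mul_assoc, ← mul_assoc, ← pow_succ', ← mul_pow, one_div,
      mul_inv_cancel₀ hlam, one_pow, one_mul]

lemma degExp_subst_degLog {lam : ℝ} (hlam : lam ≠ 0) (x : ℝ) :
    (degExp lam x).subst (degLog lam) = degExp 1 x := by
  have hL := HasSubst.of_constantCoeff_zero' (constantCoeff_degLog lam)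
  rw [degExp_eq_rescale hlam, rescale_eq_subst, subst_comp_subst_apply (HasSubst.smul_X' lam) hL,
    subst_smul hL, subst_X hL, smul_degLog hlam, binomialSeries_subst, div_mul_cancel₀ x hlam,
    degExp_one]

lemma dff_one_eq_sum_bellMatrix_degLog_mul_dff {lam : ℝ} (hlam : lam ≠ 0) (n : ℕ) (x : ℝ) :
    dff 1 n x = ∑ l ∈ range (n + 1), bellMatrix (degLog lam) n l * dff lam l x := by
  have h := congrArg (coeff n) (degExp_subst_degLog hlam x)
  rw [coeff_subst_eq_sum_range (constantCoeff_degLog lam), degExp, degExp, coeff_mk,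
    eq_div_iff (Nat.cast_ne_zero.mpr n.factorial_ne_zero)] at h
  rw [← h, sum_mul]
  refine sum_congr rfl fun l _ => ?_
  rw [coeff_mk, bellMatrix]
  field_simp

theorem jindalrae_stirling_first_kind (lam : ℝ) (hlam : lam ≠ 0)
    (S1 SJ1 : ℕ → ℕ → ℝ)
    (hS1 : ∀ (n : ℕ) (x : ℝ), dff 1 n x = ∑ l ∈ Finset.range (n + 1), S1 n l * dff lam l x)
    (hSJ1 : ∀ k : ℕ, (PowerSeries.C ((k.factorial : ℝ))⁻¹) * (pscomp (degLog lam) (degLog lam)) ^ k = PowerSeries.mk (fun n => if k ≤ n then SJ1 n k / n.factorial else 0))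
    : ∀ n k : ℕ, k ≤ n → SJ1 n k = ∑ m ∈ Finset.Icc k n, S1 n m * S1 m k := by
  intro n k hkn
  have hL := constantCoeff_degLog lam
  have hS1_eq (m l : ℕ) (hl : l ≤ m) : S1 m l = bellMatrix (degLog lam) m l :=
    eq_of_forall_sum_mul_dff_eq lam
      (fun x => (hS1 m x).symm.trans (dff_one_eq_sum_bellMatrix_degLog_mul_dff hlam m x)) l hl
  have hSJ1_eq : SJ1 n k = bellMatrix (pscomp (degLog lam) (degLog lam)) n k := by
    have h := congrArg (coeff n) (hSJ1 k)
    rw [coeff_C_mul, coeff_mk, if_pos hkn,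
      eq_div_iff (Nat.cast_ne_zero.mpr n.factorial_ne_zero)] at h
    rw [bellMatrix, ← h]
    field_simp
  rw [hSJ1_eq, pscomp_eq_subst hL, bellMatrix_subst hL]
  refine (sum_subset_zero_on_sdiff (fun m hm => ?_) (fun m hm => ?_) (fun m hm => ?_)).symm
  · simp only [mem_Icc, mem_range] at hm ⊢
    omega
  · simp only [mem_sdiff, mem_Icc, mem_range] at hm
    rw [bellMatrix_eq_zero_of_lt hL (show m < k by omega), mul_zero]
  · rw [mem_Icc] at hm
    rw [hS1_eq n m hm.2, hS1_eq m k hm.1]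
end

section
/- Fix a real number λ ≠ 0. For every integer n ≥ 0 and every real x, the Gaenari polynomial satisfies G_{n,λ}(x) = Σ_{k=0}^{n} (x)_{k,λ} S^{(1)}_{J,λ}(n,k); in particular G_{n,λ} = Σ_{k=0}^{n} (1)_{k,λ} S^{(1)}_{J,λ}(n,k). -/
open Finset

/-!
Expanding `e_λ^x(u) = Σ_k (x)_{k,λ} u^k/k!` with `u = log_λ(log_λ(1+t)+1)` and reading off the
coefficient of `t^n` gives the claim, since the coefficient of `t^n` in `u^k/k!` is
`S^{(1)}_{J,λ}(n,k)/n!`.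
-/

open PowerSeries Nat

theorem coeff_pow_eq_of_C_inv_factorial_mul_pow {g : PowerSeries ℝ} {s : ℕ → ℕ → ℝ} {k n : ℕ}
    (hs : C ((k ! : ℝ))⁻¹ * g ^ k = mk fun m => if k ≤ m then s m k / m ! else 0)
    (hkn : k ≤ n) :
    coeff n (g ^ k) = k ! * s n k / n ! := by
  have hk : (k ! : ℝ) ≠ 0 := mod_cast k.factorial_ne_zero
  have h := congrArg (coeff n) hs
  rw [coeff_C_mul, coeff_mk, if_pos hkn] at h
  rw [mul_div_assoc, ← h, mul_inv_cancel_left₀ hk]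

theorem coeff_pscomp_eq_sum {f g : PowerSeries ℝ} {s : ℕ → ℕ → ℝ}
    (hs : ∀ k, C ((k ! : ℝ))⁻¹ * g ^ k = mk fun m => if k ≤ m then s m k / m ! else 0)
    (n : ℕ) :
    coeff n (pscomp f g) = (∑ k ∈ range (n + 1), k ! * coeff k f * s n k) / n ! := by
  rw [pscomp, coeff_mk, sum_div]
  refine sum_congr rfl fun k hk => ?_
  rw [coeff_pow_eq_of_C_inv_factorial_mul_pow (hs k) (Nat.lt_succ_iff.mp (mem_range.mp hk))]
  ring

theorem factorial_mul_coeff_degExp (lam x : ℝ) (k : ℕ) :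
    k ! * coeff k (degExp lam x) = dff lam k x := by
  have hk : (k ! : ℝ) ≠ 0 := mod_cast k.factorial_ne_zero
  rw [degExp, coeff_mk]
  field_simp

theorem gaenari_polynomial_expansion_general (lam : ℝ)
    (SJ1 : ℕ → ℕ → ℝ) (G : ℕ → ℝ → ℝ)
    (hSJ1 : ∀ k : ℕ, (PowerSeries.C ((k.factorial : ℝ))⁻¹) * (pscomp (degLog lam) (degLog lam)) ^ k = PowerSeries.mk (fun n => if k ≤ n then SJ1 n k / n.factorial else 0))
    (hG : ∀ x : ℝ, pscomp (degExp lam x) (pscomp (degLog lam) (degLog lam)) = PowerSeries.mk (fun n => G n x / n.factorial))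
    : ∀ (n : ℕ) (x : ℝ), G n x = ∑ k ∈ Finset.range (n + 1), dff lam k x * SJ1 n k := by
  intro n x
  have hn : (n ! : ℝ) ≠ 0 := mod_cast n.factorial_ne_zero
  have h := congrArg (coeff n) (hG x)
  simp only [coeff_pscomp_eq_sum hSJ1, factorial_mul_coeff_degExp, coeff_mk] at h
  exact (div_left_inj' hn).mp h.symm

theorem gaenari_polynomial_expansion (lam : ℝ) (hlam : lam ≠ 0)
    (SJ1 : ℕ → ℕ → ℝ) (G : ℕ → ℝ → ℝ)
    (hSJ1 : ∀ k : ℕ, (PowerSeries.C ((k.factorial : ℝ))⁻¹) * (pscomp (degLog lam) (degLog lam)) ^ k = PowerSeries.mk (fun n => if k ≤ n then SJ1 n k / n.factorial else 0))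
    (hG : ∀ x : ℝ, pscomp (degExp lam x) (pscomp (degLog lam) (degLog lam)) = PowerSeries.mk (fun n => G n x / n.factorial))
    : ∀ (n : ℕ) (x : ℝ), G n x = ∑ k ∈ Finset.range (n + 1), dff lam k x * SJ1 n k :=
  gaenari_polynomial_expansion_general lam SJ1 G hSJ1 hG
end
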